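/- (Live variables correctness) For every program P and live-variables analysis result β_before, β_after: if ⟨l_i, σ_i⟩ → ⋯ → ⟨l_j, σ_j⟩ is a sequence of standard steps, v ∉ β_before(l_i), and v ∈ vars(c) where l_j : c ∈ P, then there exists k with i ≤ k < j such that l_k : v := e' ∈ P for some arithmetic expression e'. -/
import Mathlib


namespace Dataflow

/-- Arithmetic expressions: integer constants, variables, +, −, ×. -/
inductive AExp (V : Type*) where
  | num : ℤ → AExp V
  | var : V → AExp V
  | add : AExp V → AExp V → AExp V
  | sub : AExp V → AExp V → AExp V
  | mul : AExp V → AExp V → AExp V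

/-- Boolean expressions. -/
inductive BExp (V : Type*) where
  | tt : BExp V
  | ff : BExp V
  | eq : AExp V → AExp V → BExp V
  | le : AExp V → AExp V → BExp V
  | not : BExp V → BExp V
  | and : BExp V → BExp V → BExp V
  | or : BExp V → BExp V → BExp V

/-- Commands: skip, v := e, if b then g, goto g, halt, done. -/
inductive Cmd (V L : Type*) where
  | skip : Cmd V L
  | assign : V → AExp V → Cmd V L
  | ifgoto : BExp V → L → Cmd V L
  | goto : L → Cmd V L
  | halt : Cmd V L
  | done : Cmd V L

variable {V L : Type*}

def AExp.vars : AExp V → Set V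
  | .num _ => ∅
  | .var v => {v}
  | .add e₁ e₂ => e₁.vars ∪ e₂.vars
  | .sub e₁ e₂ => e₁.vars ∪ e₂.vars
  | .mul e₁ e₂ => e₁.vars ∪ e₂.vars

def BExp.vars : BExp V → Set V
  | .tt => ∅
  | .ff => ∅
  | .eq e₁ e₂ => e₁.vars ∪ e₂.vars
  | .le e₁ e₂ => e₁.vars ∪ e₂.vars
  | .not b => b.vars
  | .and b₁ b₂ => b₁.vars ∪ b₂.vars
  | .or b₁ b₂ => b₁.vars ∪ b₂.vars

def Cmd.vars : Cmd V L → Set V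
  | .assign _ e => e.vars
  | .ifgoto b _ => b.vars
  | _ => ∅

/-- The set of arithmetic subexpressions of an arithmetic expression. -/
def AExp.subexp : AExp V → Set (AExp V)
  | .num n => {AExp.num n}
  | .var v => {AExp.var v}
  | .add e₁ e₂ => insert (AExp.add e₁ e₂) (e₁.subexp ∪ e₂.subexp)
  | .sub e₁ e₂ => insert (AExp.sub e₁ e₂) (e₁.subexp ∪ e₂.subexp)
  | .mul e₁ e₂ => insert (AExp.mul e₁ e₂) (e₁.subexp ∪ e₂.subexp)

/-- The set of arithmetic subexpressions of a boolean expression. -/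
def BExp.subexp : BExp V → Set (AExp V)
  | .tt => ∅
  | .ff => ∅
  | .eq e₁ e₂ => e₁.subexp ∪ e₂.subexp
  | .le e₁ e₂ => e₁.subexp ∪ e₂.subexp
  | .not b => b.subexp
  | .and b₁ b₂ => b₁.subexp ∪ b₂.subexp
  | .or b₁ b₂ => b₁.subexp ∪ b₂.subexp

/-- The set of arithmetic subexpressions of a command. -/
def Cmd.subexp : Cmd V L → Set (AExp V)
  | .assign _ e => e.subexp
  | .ifgoto b _ => b.subexp
  | _ => ∅

/-- Program states: partial maps from variables to integers. -/
abbrev State (V : Type*) := V → Option ℤ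

/-- The domain of a state: the variables on which it is defined. -/
def dom (σ : State V) : Set V := {v | σ v ≠ none}

/-- A program: a finite set of labeled commands with distinct labels (modeled as a
partial map from labels to commands with finite domain), equipped with a `next`
function on labels, a first label, and satisfying: if `l : halt ∈ P` then
`next l : done ∈ P`.  `P.cmds l = some c` formalizes `l : c ∈ P`. -/
structure Program (V L : Type*) where
  cmds : L → Option (Cmd V L)
  next : L → L
  first : L
  finite : {l | cmds l ≠ none}.Finite
  halt_done : ∀ l, cmds l = some Cmd.halt → cmds (next l) = some Cmd.done

/-- Standard big-step evaluation of arithmetic expressions. -/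
inductive AEval (σ : State V) : AExp V → ℤ → Prop where
  | num : ∀ n, AEval σ (.num n) n
  | var : ∀ v n, σ v = some n → AEval σ (.var v) n
  | add : ∀ e₁ e₂ n₁ n₂, AEval σ e₁ n₁ → AEval σ e₂ n₂ → AEval σ (.add e₁ e₂) (n₁ + n₂)
  | sub : ∀ e₁ e₂ n₁ n₂, AEval σ e₁ n₁ → AEval σ e₂ n₂ → AEval σ (.sub e₁ e₂) (n₁ - n₂)
  | mul : ∀ e₁ e₂ n₁ n₂, AEval σ e₁ n₁ → AEval σ e₂ n₂ → AEval σ (.mul e₁ e₂) (n₁ * n₂)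

/-- Standard big-step evaluation of boolean expressions. -/
inductive BEval (σ : State V) : BExp V → Bool → Prop where
  | tt : BEval σ .tt true
  | ff : BEval σ .ff false
  | eq : ∀ e₁ e₂ n₁ n₂, AEval σ e₁ n₁ → AEval σ e₂ n₂ → BEval σ (.eq e₁ e₂) (decide (n₁ = n₂))
  | le : ∀ e₁ e₂ n₁ n₂, AEval σ e₁ n₁ → AEval σ e₂ n₂ → BEval σ (.le e₁ e₂) (decide (n₁ ≤ n₂))
  | not : ∀ b t, BEval σ b t → BEval σ (.not b) (!t)
  | and : ∀ b₁ b₂ t₁ t₂, BEval σ b₁ t₁ → BEval σ b₂ t₂ → BEval σ (.and b₁ b₂) (t₁ && t₂)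
  | or : ∀ b₁ b₂ t₁ t₂, BEval σ b₁ t₁ → BEval σ b₂ t₂ → BEval σ (.or b₁ b₂) (t₁ || t₂)

variable [DecidableEq V]

/-- The standard small-step operational semantics `⟨l,σ⟩ → ⟨l',σ'⟩`. -/
inductive Step (P : Program V L) : L → State V → L → State V → Prop where
  | assign : ∀ l σ v e n, P.cmds l = some (.assign v e) → AEval σ e n →
      Step P l σ (P.next l) (Function.update σ v (some n))
  | ifTrue : ∀ l σ b g, P.cmds l = some (.ifgoto b g) → BEval σ b true →
      Step P l σ g σ
  | ifFalse : ∀ l σ b g, P.cmds l = some (.ifgoto b g) → BEval σ b false →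
      Step P l σ (P.next l) σ
  | goto : ∀ l σ g, P.cmds l = some (.goto g) → Step P l σ g σ
  | skip : ∀ l σ, P.cmds l = some .skip → Step P l σ (P.next l) σ
  | halt : ∀ l σ, P.cmds l = some .halt → Step P l σ (P.next l) σ

/-- The successors of a label. -/
def Program.succs (P : Program V L) (l : L) : Set L :=
  match P.cmds l with
  | some (Cmd.assign _ _) => {P.next l}
  | some Cmd.skip => {P.next l}
  | some Cmd.halt => {P.next l}
  | some (Cmd.goto g) => {g}
  | some (Cmd.ifgoto _ g) => {P.next l, g}
  | _ => ∅

/-- The predecessors of a label. -/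
def Program.preds (P : Program V L) (l : L) : Set L := {g | l ∈ P.succs g}

/-! ### Live variables -/

/-- Live-variables augmented evaluation of arithmetic expressions: every variable
read must be predicted live (`v ∈ π`). -/
inductive AEvalLV (σ : State V) (π : Set V) : AExp V → ℤ → Prop where
  | num : ∀ n, AEvalLV σ π (.num n) n
  | var : ∀ v n, σ v = some n → v ∈ π → AEvalLV σ π (.var v) n
  | add : ∀ e₁ e₂ n₁ n₂, AEvalLV σ π e₁ n₁ → AEvalLV σ π e₂ n₂ → AEvalLV σ π (.add e₁ e₂) (n₁ + n₂)
  | sub : ∀ e₁ e₂ n₁ n₂, AEvalLV σ π e₁ n₁ → AEvalLV σ π e₂ n₂ → AEvalLV σ π (.sub e₁ e₂) (n₁ - n₂)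
  | mul : ∀ e₁ e₂ n₁ n₂, AEvalLV σ π e₁ n₁ → AEvalLV σ π e₂ n₂ → AEvalLV σ π (.mul e₁ e₂) (n₁ * n₂)

/-- Live-variables augmented evaluation of boolean expressions. -/
inductive BEvalLV (σ : State V) (π : Set V) : BExp V → Bool → Prop where
  | tt : BEvalLV σ π .tt true
  | ff : BEvalLV σ π .ff false
  | eq : ∀ e₁ e₂ n₁ n₂, AEvalLV σ π e₁ n₁ → AEvalLV σ π e₂ n₂ → BEvalLV σ π (.eq e₁ e₂) (decide (n₁ = n₂))
  | le : ∀ e₁ e₂ n₁ n₂, AEvalLV σ π e₁ n₁ → AEvalLV σ π e₂ n₂ → BEvalLV σ π (.le e₁ e₂) (decide (n₁ ≤ n₂))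
  | not : ∀ b t, BEvalLV σ π b t → BEvalLV σ π (.not b) (!t)
  | and : ∀ b₁ b₂ t₁ t₂, BEvalLV σ π b₁ t₁ → BEvalLV σ π b₂ t₂ → BEvalLV σ π (.and b₁ b₂) (t₁ && t₂)
  | or : ∀ b₁ b₂ t₁ t₂, BEvalLV σ π b₁ t₁ → BEvalLV σ π b₂ t₂ → BEvalLV σ π (.or b₁ b₂) (t₁ || t₂)

/-- The live-variables augmented small-step semantics `⟨l,σ,π⟩ ⇒ ⟨l',σ',π'⟩`:
for `l : v := e` any `π' ⊆ π ∪ {v}`; for `l : if b then g` any `π' ⊆ π`;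
for goto, skip, halt, `π' = π`. -/
inductive LVStep (P : Program V L) : L → State V → Set V → L → State V → Set V → Prop where
  | assign : ∀ l σ π v e n π', P.cmds l = some (.assign v e) → AEvalLV σ π e n →
      π' ⊆ π ∪ {v} →
      LVStep P l σ π (P.next l) (Function.update σ v (some n)) π'
  | ifTrue : ∀ l σ π b g π', P.cmds l = some (.ifgoto b g) → BEvalLV σ π b true →
      π' ⊆ π → LVStep P l σ π g σ π'
  | ifFalse : ∀ l σ π b g π', P.cmds l = some (.ifgoto b g) → BEvalLV σ π b false →
      π' ⊆ π → LVStep P l σ π (P.next l) σ π'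
  | goto : ∀ l σ π g, P.cmds l = some (.goto g) → LVStep P l σ π g σ π
  | skip : ∀ l σ π, P.cmds l = some .skip → LVStep P l σ π (P.next l) σ π
  | halt : ∀ l σ π, P.cmds l = some .halt → LVStep P l σ π (P.next l) σ π

/-- The live-variables transfer function. -/
def lvTransfer (c : Cmd V L) (β : Set V) : Set V :=
  match c with
  | .assign v e => (β \ {v}) ∪ e.vars
  | .ifgoto b _ => β ∪ b.vars
  | _ => β

/-- A live-variables analysis result: a solution of the backward dataflow equations. -/
structure LVAnalysis (P : Program V L) where
  before : L → Set V
  after : L → Set V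
  halt_after : ∀ l, P.cmds l = some Cmd.halt → after l = ∅
  after_eq : ∀ l c, P.cmds l = some c → c ≠ Cmd.done →
      after l = ⋃ g ∈ P.succs l, before g
  before_eq : ∀ l c, P.cmds l = some c → before l = lvTransfer c (after l)
/-! ### Very busy expressions -/

/-- The very-busy-expressions augmented small-step semantics `⟨l,σ,π⟩ ⇒ ⟨l',σ',π'⟩`. -/
inductive VBEStep (P : Program V L) :
    L → State V → Set (AExp V) → L → State V → Set (AExp V) → Prop where
  | assign : ∀ l σ π v e n π', P.cmds l = some (.assign v e) → AEval σ e n →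
      (∀ e' ∈ π, e' ∈ AExp.subexp e ∨ v ∉ AExp.vars e') →
      π \ AExp.subexp e ⊆ π' →
      VBEStep P l σ π (P.next l) (Function.update σ v (some n)) π'
  | ifTrue : ∀ l σ π b g π', P.cmds l = some (.ifgoto b g) → BEval σ b true →
      π \ BExp.subexp b ⊆ π' → VBEStep P l σ π g σ π'
  | ifFalse : ∀ l σ π b g π', P.cmds l = some (.ifgoto b g) → BEval σ b false →
      π \ BExp.subexp b ⊆ π' → VBEStep P l σ π (P.next l) σ π'
  | goto : ∀ l σ π g, P.cmds l = some (.goto g) → VBEStep P l σ π g σ π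
  | skip : ∀ l σ π, P.cmds l = some .skip → VBEStep P l σ π (P.next l) σ π
  | halt : ∀ l σ π, P.cmds l = some .halt → π = ∅ → VBEStep P l σ π (P.next l) σ π

/-- The very-busy-expressions transfer function. -/
def vbeTransfer (c : Cmd V L) (β : Set (AExp V)) : Set (AExp V) :=
  match c with
  | .assign v e => (β \ {e' ∈ β | v ∈ AExp.vars e'}) ∪ AExp.subexp e
  | .ifgoto b _ => β ∪ BExp.subexp b
  | _ => β

/-- A very-busy-expressions analysis result: a solution of the backward dataflow
equations. -/
structure VBEAnalysis (P : Program V L) where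
  before : L → Set (AExp V)
  after : L → Set (AExp V)
  done_after : ∀ l, P.cmds l = some Cmd.done → after l = ∅
  after_eq : ∀ l c, P.cmds l = some c → c ≠ Cmd.done →
      after l = ⋂ g ∈ P.succs l, before g
  before_eq : ∀ l c, P.cmds l = some c → before l = vbeTransfer c (after l)
/-! ### Defined variables -/

/-- The defined-variables augmented small-step semantics `⟨l,σ,π⟩ ⇒ ⟨l',σ',π'⟩`
(incorporating the upward-closure metarule in the lattice of sets of variables
ordered by reverse inclusion): for `l : v := e` any `π' ⊆ π ∪ {v}`; for all
other commands any `π' ⊆ π`. -/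
inductive DVStep (P : Program V L) : L → State V → Set V → L → State V → Set V → Prop where
  | assign : ∀ l σ π v e n π', P.cmds l = some (.assign v e) → AEval σ e n →
      π' ⊆ π ∪ {v} →
      DVStep P l σ π (P.next l) (Function.update σ v (some n)) π'
  | ifTrue : ∀ l σ π b g π', P.cmds l = some (.ifgoto b g) → BEval σ b true →
      π' ⊆ π → DVStep P l σ π g σ π'
  | ifFalse : ∀ l σ π b g π', P.cmds l = some (.ifgoto b g) → BEval σ b false →
      π' ⊆ π → DVStep P l σ π (P.next l) σ π'
  | goto : ∀ l σ π g π', P.cmds l = some (.goto g) → π' ⊆ π → DVStep P l σ π g σ π'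
  | skip : ∀ l σ π π', P.cmds l = some .skip → π' ⊆ π → DVStep P l σ π (P.next l) σ π'
  | halt : ∀ l σ π π', P.cmds l = some .halt → π' ⊆ π → DVStep P l σ π (P.next l) σ π'

/-- The defined-variables transfer function. -/
def dvTransfer (c : Cmd V L) (β : Set V) : Set V :=
  match c with
  | .assign v _ => β ∪ {v}
  | _ => β

/-- A defined-variables analysis result: a solution of the forward dataflow equations. -/
structure DVAnalysis (P : Program V L) where
  before : L → Set V
  after : L → Set V
  first_before : before P.first = ∅
  before_eq : ∀ l c, P.cmds l = some c → l ≠ P.first →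
      before l = ⋂ g ∈ P.preds l, after g
  after_eq : ∀ l c, P.cmds l = some c → after l = dvTransfer c (before l)
/-! ### Reaching definitions -/

/-- The reaching-definitions transfer function. -/
def rdTransfer (l : L) (c : Cmd V L) (β : V → Set L) : V → Set L :=
  match c with
  | .assign v _ => Function.update β v {l}
  | _ => β

/-- A reaching-definitions analysis result: a solution of the forward dataflow
equations over the lattice of functions `V → Set L` with the pointwise subset
order. -/
structure RDAnalysis (P : Program V L) where
  before : L → V → Set L
  after : L → V → Set L
  first_before : before P.first = fun _ => ∅
  before_eq : ∀ l c, P.cmds l = some c → l ≠ P.first →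
      before l = fun w => ⋃ g ∈ P.preds l, after g w
  after_eq : ∀ l c, P.cmds l = some c → after l = rdTransfer l c (before l)

set_option linter.unusedSectionVars false in
theorem vars_subset_before {P : Program V L} (A : LVAnalysis P) {l : L} {c : Cmd V L}
    (hc : P.cmds l = some c) : c.vars ⊆ A.before l := by
  rw [A.before_eq l c hc]
  cases c <;> simp [Cmd.vars, lvTransfer]

set_option linter.unusedSectionVars false in
theorem before_succ_subset {P : Program V L} (A : LVAnalysis P) {l g : L} {c : Cmd V L}
    (hc : P.cmds l = some c) (hne : c ≠ Cmd.done) (hg : g ∈ P.succs l) :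
    A.before g ⊆ A.after l := by
  rw [A.after_eq l c hc hne]
  exact fun x hx => Set.mem_biUnion hg hx

theorem not_before_step {P : Program V L} (A : LVAnalysis P) {l l' : L} {σ σ' : State V} {v : V}
    (hstep : Step P l σ l' σ') (hv : v ∉ A.before l)
    (hass : ∀ e, P.cmds l ≠ some (Cmd.assign v e)) : v ∉ A.before l' := by
  cases hstep with
  | assign w e n hc hev =>
      have hne : w ≠ v := fun h => hass e (h ▸ hc)
      rw [A.before_eq l _ hc] at hv
      simp only [lvTransfer, Set.mem_union, Set.mem_diff, Set.mem_singleton_iff, not_or,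
        not_and, not_not] at hv
      have hafter : v ∉ A.after l := fun h => hne (hv.1 h).symm
      exact fun h => hafter (before_succ_subset A hc (by simp) (by simp [Program.succs, hc]) h)
  | ifTrue b g hc hev =>
      rw [A.before_eq l _ hc] at hv
      simp only [lvTransfer, Set.mem_union, not_or] at hv
      exact fun h => hv.1 (before_succ_subset A hc (by simp) (by simp [Program.succs, hc]) h)
  | ifFalse b g hc hev =>
      rw [A.before_eq l _ hc] at hv
      simp only [lvTransfer, Set.mem_union, not_or] at hv
      exact fun h => hv.1 (before_succ_subset A hc (by simp) (by simp [Program.succs, hc]) h)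
  | goto g hc =>
      rw [A.before_eq l _ hc] at hv
      simp only [lvTransfer] at hv
      exact fun h => hv (before_succ_subset A hc (by simp) (by simp [Program.succs, hc]) h)
  | skip hc =>
      rw [A.before_eq l _ hc] at hv
      simp only [lvTransfer] at hv
      exact fun h => hv (before_succ_subset A hc (by simp) (by simp [Program.succs, hc]) h)
  | halt hc =>
      rw [A.before_eq l _ hc] at hv
      simp only [lvTransfer] at hv
      exact fun h => hv (before_succ_subset A hc (by simp) (by simp [Program.succs, hc]) h)

/-- (Live variables correctness) If `⟨l_i, σ_i⟩ → ⋯ → ⟨l_j, σ_j⟩` is a sequence of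
standard steps, `v ∉ β_before(l_i)`, and `v ∈ vars(c)` where `l_j : c ∈ P`, then
there is `i ≤ k < j` with `l_k : v := e' ∈ P` for some arithmetic expression `e'`. -/
theorem lv_correctness (P : Program V L) (A : LVAnalysis P)
    (ls : ℕ → L) (σs : ℕ → State V) (i j : ℕ) (hij : i ≤ j)
    (hsteps : ∀ k, i ≤ k → k < j → Step P (ls k) (σs k) (ls (k + 1)) (σs (k + 1)))
    (v : V) (hv : v ∉ A.before (ls i))
    (c : Cmd V L) (hc : P.cmds (ls j) = some c) (hvc : v ∈ c.vars) :
    ∃ k, i ≤ k ∧ k < j ∧ ∃ e', P.cmds (ls k) = some (Cmd.assign v e') := by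
  have main : ∀ n i, i + n = j → v ∉ A.before (ls i) →
      (∀ k, i ≤ k → k < j → Step P (ls k) (σs k) (ls (k + 1)) (σs (k + 1))) →
      ∃ k, i ≤ k ∧ k < j ∧ ∃ e', P.cmds (ls k) = some (Cmd.assign v e') := by
    intro n
    induction n with
    | zero =>
        intro i hi hv _
        have : i = j := by omega
        subst this
        exact absurd (vars_subset_before A hc hvc) hv
    | succ n ih =>
        intro i hi hv hst
        have hstep := hst i le_rfl (by omega)
        by_cases hass : ∃ e', P.cmds (ls i) = some (Cmd.assign v e')
        · exact ⟨i, le_rfl, by omega, hass⟩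
        · push_neg at hass
          have hv' := not_before_step A hstep hv hass
          obtain ⟨k, hk1, hk2, he⟩ :=
            ih (i + 1) (by omega) hv' (fun k hk hk' => hst k (by omega) hk')
          exact ⟨k, by omega, hk2, he⟩
  exact main (j - i) i (by omega) hv hsteps


end Dataflow
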